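/- arXiv:math/0405518 — 2 statements merged into one kernel-verified Lean document; each statement's English description precedes it below -/
import Mathlib

section
/- Let q_v > 3 be a prime power and let l be a prime not dividing q_v(q_v + 1). Then the second group cohomology H²(SL(2, F_{q_v}), Z/lZ) of the finite group SL(2, F_{q_v}) with coefficients in Z/lZ (trivial action) vanishes. -/
open Matrix Polynomial

/-- `SL(2, R)`. -/
abbrev SL2 (R : Type*) [CommRing R] : Type _ := Matrix.SpecialLinearGroup (Fin 2) R

/-- The principal congruence subgroup of level `M`: matrices in `SL(2,R)` congruent to the
identity entrywise modulo `M`. -/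
def GammaM {R : Type*} [CommRing R] (M : R) : Subgroup (SL2 R) :=
  (Matrix.SpecialLinearGroup.map (Ideal.Quotient.mk (Ideal.span {M}))).ker

/-- The congruence subgroup `Γ₀(M)`: matrices whose lower-left entry is `≡ 0 mod M`. -/
def Gamma0M {R : Type*} [CommRing R] (M : R) : Subgroup (SL2 R) where
  carrier := {γ | M ∣ (γ : Matrix (Fin 2) (Fin 2) R) 1 0}
  one_mem' := by simp
  mul_mem' := by
    intro a b ha hb
    have : ((a * b : SL2 R) : Matrix (Fin 2) (Fin 2) R) 1 0
        = (a : Matrix (Fin 2) (Fin 2) R) 1 0 * (b : Matrix (Fin 2) (Fin 2) R) 0 0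
          + (a : Matrix (Fin 2) (Fin 2) R) 1 1 * (b : Matrix (Fin 2) (Fin 2) R) 1 0 := by
      simp [Matrix.mul_apply, Fin.sum_univ_two]
    simpa [Set.mem_setOf_eq, this] using dvd_add (ha.mul_right _) (hb.mul_left _)
  inv_mem' := by
    intro a ha
    have : ((a⁻¹ : SL2 R) : Matrix (Fin 2) (Fin 2) R) 1 0
        = -(a : Matrix (Fin 2) (Fin 2) R) 1 0 := by
      rw [Matrix.SpecialLinearGroup.coe_inv, Matrix.adjugate_fin_two]
      simp
    simpa [Set.mem_setOf_eq, this] using ha.neg_right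

/-- The congruence subgroup `Γ⁰(M)`: matrices whose upper-right entry is `≡ 0 mod M`. -/
def Gamma0'M {R : Type*} [CommRing R] (M : R) : Subgroup (SL2 R) where
  carrier := {γ | M ∣ (γ : Matrix (Fin 2) (Fin 2) R) 0 1}
  one_mem' := by simp
  mul_mem' := by
    intro a b ha hb
    have : ((a * b : SL2 R) : Matrix (Fin 2) (Fin 2) R) 0 1
        = (a : Matrix (Fin 2) (Fin 2) R) 0 0 * (b : Matrix (Fin 2) (Fin 2) R) 0 1
          + (a : Matrix (Fin 2) (Fin 2) R) 0 1 * (b : Matrix (Fin 2) (Fin 2) R) 1 1 := by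
      simp [Matrix.mul_apply, Fin.sum_univ_two]
    simpa [Set.mem_setOf_eq, this] using dvd_add (hb.mul_left _) (ha.mul_right _)
  inv_mem' := by
    intro a ha
    have : ((a⁻¹ : SL2 R) : Matrix (Fin 2) (Fin 2) R) 0 1
        = -(a : Matrix (Fin 2) (Fin 2) R) 0 1 := by
      rw [Matrix.SpecialLinearGroup.coe_inv, Matrix.adjugate_fin_two]
      simp
    simpa [Set.mem_setOf_eq, this] using ha.neg_right

/-- The matrix `τ = [[p,0],[0,1]]`. -/
def tauM {R : Type*} [CommRing R] (p : R) : Matrix (Fin 2) (Fin 2) R := !![p, 0; 0, 1]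

/-- The matrix `J = [[0,1],[-1,0]]`. -/
def JM {R : Type*} [CommRing R] : Matrix (Fin 2) (Fin 2) R := !![0, 1; -1, 0]

/-- The matrix `J⁻¹ = [[0,-1],[1,0]]`. -/
def JinvM {R : Type*} [CommRing R] : Matrix (Fin 2) (Fin 2) R := !![0, -1; 1, 0]

/-- `Ḡ`: the abelianization of a group modulo the torsion subgroup of the abelianization. -/
abbrev Gbar (G : Type*) [Group G] : Type _ :=
  Abelianization G ⧸ CommGroup.torsion (Abelianization G)

/-- The canonical projection `G →* Ḡ`. -/
def barMk (G : Type*) [Group G] : G →* Gbar G :=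
  (QuotientGroup.mk' (CommGroup.torsion (Abelianization G))).comp Abelianization.of

section SL2Aux

open Subgroup Finset in
lemma sl2aux_cyclic {G M : Type*} [Group G] [CommRing M] (f : G → G → M)
    (hf : ∀ a b c, f a b + f (a*b) c = f b c + f a (b*c))
    (t w : G) (hw : w * t * w⁻¹ = t⁻¹)
    (hnpos : 0 < orderOf t) (hn0 : ((orderOf t : ℕ) : M) = 0)
    (h2 : IsUnit (2 : M)) :
    ∃ φ : G → M, ∀ a b, a ∈ Subgroup.zpowers t → b ∈ Subgroup.zpowers t →
      f a b = φ a + φ b - φ (a * b) := by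
  classical
  set n := orderOf t with hn
  set κ := f 1 1 with hκ
  have hg1 : ∀ g, f g 1 = κ := by
    intro g
    have h := hf g 1 1
    simp only [mul_one, one_mul] at h
    linear_combination h
  have h1g : ∀ g, f 1 g = κ := by
    intro g
    have h := hf 1 1 g
    simp only [mul_one, one_mul] at h
    linear_combination -h
  set F : ℕ → M := fun j => f (t^j) t with hF
  set S : ℕ → M := fun k => ∑ i ∈ range k, F i with hS
  have htn : t ^ n = 1 := by rw [hn]; exact pow_orderOf_eq_one t
  have Fper : ∀ j, F (j + n) = F j := by
    intro j
    show f (t^(j+n)) t = f (t^j) t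
    rw [pow_add, htn, mul_one]
  have sumF : ∀ a, ∑ i ∈ range n, F (a + i) = S n := by
    intro a
    induction a with
    | zero => show ∑ i ∈ range n, F (0 + i) = S n
              simp only [zero_add]
              rfl
    | succ a ih =>
      have h1 : ∑ i ∈ range (n+1), F (a + i) = ∑ i ∈ range n, F (a + (i+1)) + F (a + 0) :=
        Finset.sum_range_succ' _ n
      have h2 : ∑ i ∈ range (n+1), F (a + i) = ∑ i ∈ range n, F (a + i) + F (a + n) :=
        Finset.sum_range_succ _ n
      have h3 : F (a + n) = F (a + 0) := by rw [add_zero, Fper]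
      have h5 : ∑ i ∈ range n, F ((a+1) + i) = ∑ i ∈ range n, F (a + (i+1)) :=
        Finset.sum_congr rfl (fun i _ => by congr 1; omega)
      rw [ih] at h2
      rw [h5]
      linear_combination (h1.symm.trans h2) + h3
  have Sadd : ∀ a, S (a + n) = S a + S n := by
    intro a
    have h := Finset.sum_range_add F a n
    rw [sumF a] at h
    exact h
  have Snk : ∀ a k, S (a + n * k) = S a + k • S n := by
    intro a k
    induction k with
    | zero => simp
    | succ k ih =>
      have : a + n * (k+1) = (a + n * k) + n := by ring
      rw [this, Sadd, ih, succ_nsmul]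
      ring
  set D : ℕ → ℕ → M := fun a b => f (t^a) (t^b) - κ - S (a+b) + S a + S b with hD
  have Dstep : ∀ a b, D a b = D a (b+1) := by
    intro a b
    have h := hf (t^a) (t^b) t
    rw [← pow_add] at h
    have hbt : t^b * t = t^(b+1) := (pow_succ t b).symm
    rw [hbt] at h
    have hS1 : S (a+b+1) = S (a+b) + F (a+b) := Finset.sum_range_succ _ _
    have hS2 : S (b+1) = S b + F b := Finset.sum_range_succ _ _
    simp only [hD]
    have hab : a + (b+1) = a + b + 1 := by ring
    rw [hab, hS1, hS2]
    have hFb : F b = f (t^b) t := rfl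
    have hFab : F (a+b) = f (t^(a+b)) t := rfl
    linear_combination h + hFb - hFb
  have Dsteps : ∀ a b m, D a b = D a (b+m) := by
    intro a b m
    induction m with
    | zero => rfl
    | succ m ih => rw [ih, ← add_assoc]; exact Dstep a (b+m)
  have Dnk : ∀ a k, D a (n*k) = 0 := by
    intro a k
    have h1 : t^(n*k) = 1 := by rw [pow_mul, pow_orderOf_eq_one, one_pow]
    have h2 : S (a + n*k) = S a + k • S n := Snk a k
    have h3 : S (n*k) = k • S n := by
      have := Snk 0 k
      simpa [hS] using this
    simp only [hD, h1, h2, h3, hg1]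
    ring
  have K1 : ∀ a b, f (t^a) (t^b) = κ + S (a+b) - S a - S b := by
    intro a b
    have hm : b + (n*(b+1) - b) = n*(b+1) := by
      have : b ≤ n*(b+1) := by
        calc b ≤ b+1 := Nat.le_succ b
        _ ≤ n*(b+1) := Nat.le_mul_of_pos_left _ hnpos
      omega
    have := Dsteps a b (n*(b+1) - b)
    rw [hm, Dnk a (b+1)] at this
    have : D a b = 0 := this
    simp only [hD] at this
    linear_combination this
  -- conjugation coboundary
  set u : G → M := fun g => f w g - f (w*g*w⁻¹) w with hu
  have conj : ∀ g₁ g₂, f (w*g₁*w⁻¹) (w*g₂*w⁻¹) = f g₁ g₂ + u (g₁*g₂) - u g₁ - u g₂ := by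
    intro g₁ g₂
    have ha : (w*g₁*w⁻¹) * w = w * g₁ := by group
    have hab : (w*g₁*w⁻¹) * (w*g₂*w⁻¹) = w*(g₁*g₂)*w⁻¹ := by group
    have h1 := hf (w*g₁*w⁻¹) w g₂
    rw [ha] at h1
    have h2' := hf w g₁ g₂
    have h3 := hf (w*g₁*w⁻¹) (w*g₂*w⁻¹) w
    rw [hab] at h3
    have hbw : (w*g₂*w⁻¹) * w = w * g₂ := by group
    rw [hbw] at h3
    simp only [hu]
    linear_combination h3 - h1 + h2'
  have hconj : ∀ k : ℕ, w * t^k * w⁻¹ = (t^k)⁻¹ := by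
    intro k
    have h1 : w * t^k * w⁻¹ = (w * t * w⁻¹)^k := by
      induction k with
      | zero => simp
      | succ k ih => rw [pow_succ, pow_succ, ← ih]; group
    rw [h1, hw, inv_pow]
  -- the vanishing of S n
  have ci : ∀ i : ℕ, f t⁻¹ ((t^i)⁻¹) = f t (t^i) + (u (t^(i+1)) - u (t^i)) - u t := by
    intro i
    have h := conj t (t^i)
    rw [hw, hconj i] at h
    have hti : t * t^i = t^(i+1) := (pow_succ' t i).symm
    rw [hti] at h
    linear_combination h
  have lhs1 : ∀ i : ℕ, f t⁻¹ ((t^i)⁻¹) = (κ - S (n-1)) + (S ((n-1)*(i+1)) - S ((n-1)*i)) := by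
    intro i
    have hti : t⁻¹ = t^(n-1) := by
      apply eq_comm.mp
      apply eq_inv_of_mul_eq_one_left
      rw [← pow_succ]
      have : n - 1 + 1 = n := by omega
      rw [this, hn, pow_orderOf_eq_one]
    have hti2 : (t^i)⁻¹ = t^((n-1)*i) := by
      rw [← inv_pow, hti, ← pow_mul]
    have := K1 (n-1) ((n-1)*i)
    rw [← hti, ← hti2] at this
    have harith : (n-1) + (n-1)*i = (n-1)*(i+1) := by ring
    rw [harith] at this
    linear_combination this
  have rhs1 : ∀ i : ℕ, f t (t^i) = (κ - S 1) + (S (i+1) - S i) := by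
    intro i
    have := K1 1 i
    rw [pow_one] at this
    have : f t (t^i) = κ + S (1+i) - S 1 - S i := this
    have harith : 1 + i = i + 1 := by ring
    rw [harith] at this
    linear_combination this
  have sumL : ∑ i ∈ range n, f t⁻¹ ((t^i)⁻¹)
      = n • (κ - S (n-1)) + (S ((n-1)*n) - S ((n-1)*0)) := by
    rw [Finset.sum_congr rfl (fun i _ => lhs1 i), Finset.sum_add_distrib,
      Finset.sum_const, Finset.card_range,
      Finset.sum_range_sub (fun i => S ((n-1)*i))]
  have sumR : ∑ i ∈ range n, f t (t^i) = n • (κ - S 1) + (S n - S 0) := by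
    rw [Finset.sum_congr rfl (fun i _ => rhs1 i), Finset.sum_add_distrib,
      Finset.sum_const, Finset.card_range, Finset.sum_range_sub (fun i => S i)]
  have sumC : ∑ i ∈ range n, f t⁻¹ ((t^i)⁻¹)
      = ∑ i ∈ range n, f t (t^i) + (u (t^n) - u (t^0)) - n • u t := by
    rw [Finset.sum_congr rfl (fun i _ => ci i), Finset.sum_sub_distrib,
      Finset.sum_add_distrib, Finset.sum_const, Finset.card_range,
      Finset.sum_range_sub (fun i => u (t^i))]
  have hSn : S n = 0 := by
    have hut : u (t^n) = u (t^0) := by rw [pow_zero, hn, pow_orderOf_eq_one]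
    have hnM : ∀ y : M, n • y = 0 := by
      intro y; rw [nsmul_eq_mul, hn0, zero_mul]
    have hS0 : S 0 = 0 := by simp [hS]
    have hSn1 : S ((n-1)*n) = ((n:M) - 1) * S n := by
      have h1 : (n-1)*n = 0 + n * (n-1) := by ring
      rw [h1, Snk 0 (n-1), hS0, zero_add, nsmul_eq_mul, Nat.cast_sub hnpos, Nat.cast_one]
    have hmul0 : (n-1)*0 = 0 := by ring
    have E := sumL.symm.trans sumC
    rw [sumR, hmul0] at E
    simp only [hnM, hut, hS0, hSn1, hn0] at E
    have h2' : (2:M) * S n = 0 := by linear_combination -E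
    obtain ⟨v, hv⟩ := h2
    obtain ⟨m, hm⟩ : ∃ m : M, m * 2 = 1 := ⟨(v⁻¹ : Mˣ), by rw [← hv]; exact_mod_cast v.inv_mul⟩
    calc S n = (m * 2) * S n := by rw [hm, one_mul]
    _ = m * ((2:M) * S n) := by ring
    _ = 0 := by rw [h2', mul_zero]
  have hSmod : ∀ a b, a ≡ b [MOD n] → S a = S b := by
    have key : ∀ a b, a ≤ b → a ≡ b [MOD n] → S a = S b := by
      intro a b hab h
      obtain ⟨k, hk⟩ := (Nat.modEq_iff_dvd' hab).mp h
      have : b = a + n * k := by omega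
      rw [this, Snk, hSn, smul_zero, add_zero]
    intro a b h
    rcases le_total a b with hab | hab
    · exact key a b hab h
    · exact (key b a hab h.symm).symm
  -- exponent function
  have hexp : ∀ c ∈ Subgroup.zpowers t, ∃ k : ℕ, t^k = c := by
    intro c hc
    obtain ⟨z, hz⟩ := Subgroup.mem_zpowers_iff.mp hc
    refine ⟨(z % (n:ℤ)).toNat, ?_⟩
    have hnz : (0:ℤ) < (n:ℤ) := by exact_mod_cast hnpos
    have hmod : (0:ℤ) ≤ z % (n:ℤ) := Int.emod_nonneg z (by omega)
    rw [← zpow_natCast, Int.toNat_of_nonneg hmod, hn, zpow_mod_orderOf]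
    exact hz
  set kf : G → ℕ := fun c => if h : ∃ k : ℕ, t^k = c then h.choose else 0 with hkf
  have hk : ∀ c ∈ Subgroup.zpowers t, t^(kf c) = c := by
    intro c hc
    have h := hexp c hc
    simp only [hkf, dif_pos h]
    exact h.choose_spec
  refine ⟨fun c => κ - S (kf c), fun a b ha hb => ?_⟩
  have hab : a * b ∈ Subgroup.zpowers t := mul_mem ha hb
  have e := K1 (kf a) (kf b)
  rw [hk a ha, hk b hb] at e
  have hmod : S (kf a + kf b) = S (kf (a*b)) := by
    apply hSmod
    rw [← pow_eq_pow_iff_modEq, pow_add, hk a ha, hk b hb, hk _ hab]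
  rw [hmod] at e
  linear_combination e

open Subgroup in
lemma sl2aux_transfer {G M : Type*} [Group G] [CommRing M] (f : G → G → M)
    (hf : ∀ a b c, f a b + f (a*b) c = f b c + f a (b*c))
    (H : Subgroup G) [Fintype (G ⧸ H)] (φ : G → M)
    (hφ : ∀ a b, a ∈ H → b ∈ H → f a b = φ a + φ b - φ (a*b))
    (hu : IsUnit ((Fintype.card (G ⧸ H) : M))) :
    ∃ x : G → M, ∀ a b, f a b = x a + x b - x (a*b) := by
  classical
  -- the H-part of g * (rep of q)
  set hel : G → (G ⧸ H) → G := fun g q => ((g • q).out)⁻¹ * (g * q.out) with hhel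
  have helmem : ∀ g q, hel g q ∈ H := by
    intro g q
    have h1 : QuotientGroup.mk ((g • q).out) = (QuotientGroup.mk (g * q.out) : G ⧸ H) := by
      rw [QuotientGroup.out_eq']
      exact (MulAction.Quotient.mk_smul_out H g q).symm
    simpa [hhel] using QuotientGroup.eq.mp h1
  set c : (G ⧸ H) → G → M := fun q g =>
    f g q.out + φ (hel g q) - f ((g • q).out) (hel g q) with hc
  have key : ∀ g₁ g₂ q, c q g₂ + c (g₂ • q) g₁ - c q (g₁ * g₂) = f g₁ g₂ := by
    intro g₁ g₂ q
    have hq12 : (g₁ * g₂) • q = g₁ • (g₂ • q) := by rw [mul_smul]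
    set r := q.out with hr
    set r' := (g₂ • q).out with hr'
    set r'' := ((g₁ * g₂) • q).out with hr''
    have hr2 : (g₁ • (g₂ • q)).out = r'' := by rw [← hq12]
    have h₂mem := helmem g₂ q
    have h₁mem := helmem g₁ (g₂ • q)
    have h12mem := helmem (g₁ * g₂) q
    have e1 : hel g₂ q = r'⁻¹ * (g₂ * r) := rfl
    have e2 : hel g₁ (g₂ • q) = r''⁻¹ * (g₁ * r') := by
      simp only [hhel, hr2]
      rfl
    have e3 : hel (g₁ * g₂) q = (r''⁻¹ * (g₁ * r')) * (r'⁻¹ * (g₂ * r)) := by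
      simp only [hhel, hq12, hr2, ← hr, ← hr']
      group
    have hmul1 : r'' * (r''⁻¹ * (g₁ * r')) = g₁ * r' := by group
    have hmul2 : r' * (r'⁻¹ * (g₂ * r)) = g₂ * r := by group
    have I1 := hf r'' (r''⁻¹ * (g₁ * r')) (r'⁻¹ * (g₂ * r))
    rw [hmul1] at I1
    have I2 := hf g₁ r' (r'⁻¹ * (g₂ * r))
    rw [hmul2] at I2
    have I3 := hf g₁ g₂ r
    have Iφ := hφ _ _ h₁mem h₂mem
    rw [e2] at h₁mem; rw [e1] at h₂mem
    simp only [hc, e1, e2, e3, hr2, ← hr, ← hr', ← hr'']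
    linear_combination -(hφ _ _ h₁mem h₂mem) - I1 + I2 - I3
  set x : G → M := fun g => ∑ q : G ⧸ H, c q g with hx
  have sum_eq : ∀ g₁ g₂, (Fintype.card (G ⧸ H) : M) * f g₁ g₂ = x g₁ + x g₂ - x (g₁ * g₂) := by
    intro g₁ g₂
    have h1 : ∑ q : G ⧸ H, (c q g₂ + c (g₂ • q) g₁ - c q (g₁ * g₂)) =
        ∑ q : G ⧸ H, f g₁ g₂ := Finset.sum_congr rfl fun q _ => key g₁ g₂ q
    rw [Finset.sum_const, Finset.card_univ, nsmul_eq_mul] at h1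
    have h2 : ∑ q : G ⧸ H, c (g₂ • q) g₁ = ∑ q : G ⧸ H, c q g₁ :=
      Fintype.sum_equiv (MulAction.toPerm g₂) _ _ (fun q => rfl)
    rw [Finset.sum_sub_distrib, Finset.sum_add_distrib, h2] at h1
    rw [← h1]; ring
  obtain ⟨m, hm⟩ : ∃ m : M, m * (Fintype.card (G ⧸ H) : M) = 1 := by
    obtain ⟨u, hu'⟩ := hu
    exact ⟨(u⁻¹ : Mˣ), by rw [← hu']; exact_mod_cast u.inv_mul⟩
  refine ⟨fun g => m * x g, fun a b => ?_⟩
  have := sum_eq a b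
  calc f a b = m * ((Fintype.card (G ⧸ H) : M) * f a b) := by rw [← mul_assoc, hm, one_mul]
  _ = m * x a + m * x b - m * x (a*b) := by rw [this]; ring

lemma sl2aux_card (Fv : Type) [Field Fv] [Fintype Fv] :
    Nat.card (Matrix.SpecialLinearGroup (Fin 2) Fv)
      = Fintype.card Fv * (Fintype.card Fv - 1) * (Fintype.card Fv + 1) := by
  classical
  set q := Fintype.card Fv with hq
  have hq2 : 1 < q := Fintype.one_lt_card
  set d := (Matrix.GeneralLinearGroup.det : GL (Fin 2) Fv →* Fvˣ) with hd
  have hsurj : Function.Surjective d := by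
    intro u
    refine ⟨⟨Matrix.diagonal ![(u : Fv), 1], Matrix.diagonal ![((u⁻¹ : Fvˣ) : Fv), 1], ?_, ?_⟩, ?_⟩
    · rw [Matrix.diagonal_mul_diagonal]
      have h1 : (fun i => ![(u : Fv), 1] i * ![((u⁻¹ : Fvˣ) : Fv), 1] i) = fun _ => (1:Fv) := by
        funext i
        fin_cases i <;> simp
      rw [h1]
      exact Matrix.diagonal_one
    · rw [Matrix.diagonal_mul_diagonal]
      have h1 : (fun i => ![((u⁻¹ : Fvˣ) : Fv), 1] i * ![(u : Fv), 1] i) = fun _ => (1:Fv) := by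
        funext i
        fin_cases i <;> simp
      rw [h1]
      exact Matrix.diagonal_one
    · apply Units.ext
      show (Matrix.diagonal ![(u : Fv), 1]).det = (u : Fv)
      rw [Matrix.det_diagonal, Fin.prod_univ_two]
      simp
  have hker : Nat.card d.ker = Nat.card (Matrix.SpecialLinearGroup (Fin 2) Fv) := by
    apply Nat.card_congr
    refine ⟨fun U => ⟨(U.1 : Matrix (Fin 2) (Fin 2) Fv), ?_⟩,
      fun A => ⟨Matrix.SpecialLinearGroup.toGL A, A.coeToGL_det⟩, ?_, ?_⟩
    · have h := U.2
      rw [MonoidHom.mem_ker] at h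
      exact congrArg Units.val h
    · intro U
      exact Subtype.ext (Units.ext rfl)
    · intro A
      exact Subtype.ext rfl
  have hquot : Nat.card (GL (Fin 2) Fv ⧸ d.ker) = q - 1 := by
    rw [Nat.card_congr (QuotientGroup.quotientKerEquivOfSurjective d hsurj).toEquiv]
    rw [Nat.card_eq_fintype_card, Fintype.card_units, hq]
  have hGL : Nat.card (GL (Fin 2) Fv) = (q^2 - 1) * (q^2 - q) := by
    rw [Matrix.card_GL_field, Fin.prod_univ_two]
    norm_num
    rfl
  have hmul := Subgroup.index_mul_card (G := GL (Fin 2) Fv) d.ker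
  rw [Subgroup.index_eq_card, hquot, hker, hGL] at hmul
  -- now: (q-1) * Nat.card SL = (q^2-1)*(q^2-q)
  obtain ⟨m, hm⟩ : ∃ m, q = m + 2 := ⟨q - 2, by omega⟩
  rw [hm] at hmul ⊢
  have e1 : (m+2)^2 - 1 = (m+1)*(m+3) := by
    have h : (m+1)*(m+3) + 1 = (m+2)^2 := by ring
    omega
  have e2 : (m+2)^2 - (m+2) = (m+2)*(m+1) := by
    have h : (m+2)*(m+1) + (m+2) = (m+2)^2 := by ring
    omega
  rw [e1, e2] at hmul
  have e3 : m + 2 - 1 = m + 1 := by omega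
  rw [e3] at hmul ⊢
  apply Nat.eq_of_mul_eq_mul_left (show 0 < m + 1 by omega)
  calc (m+1) * Nat.card (Matrix.SpecialLinearGroup (Fin 2) Fv)
      = (m+1)*(m+3)*((m+2)*(m+1)) := hmul
    _ = (m+1) * ((m+2) * (m+1) * (m+2+1)) := by ring

end SL2Aux

/-- for a prime power `q_v > 3` and a prime `l` not dividing `q_v(q_v + 1)`,
the second group cohomology `H²(SL(2, F_{q_v}), ℤ/lℤ)` with trivial coefficients
vanishes. -/
theorem statement10
    (qv : ℕ) (Fv : Type) [Field Fv] [Fintype Fv] (hFv : Fintype.card Fv = qv)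
    (hqv : 3 < qv) (l : ℕ) (hl : l.Prime) (hldvd : ¬ l ∣ qv * (qv + 1)) :
    Subsingleton (groupCohomology (Rep.trivial (ZMod l) (SL2 Fv) (ZMod l)) 2) := by
  classical
  haveI : Fact l.Prime := ⟨hl⟩
  haveI : Finite (SL2 Fv) := inferInstance
  -- arithmetic facts
  have hlq : ¬ l ∣ qv * (qv + 1) := hldvd
  have hl2 : l ≠ 2 := by
    rintro rfl
    exact hldvd (Nat.even_mul_succ_self qv).two_dvd
  -- a unit of order l ^ v, v the l-adic valuation of qv - 1
  set v := (qv - 1).factorization l with hvdef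
  have hdvd : l ^ v ∣ qv - 1 := Nat.ordProj_dvd _ _
  have hcard_units : Fintype.card Fvˣ = qv - 1 := by rw [Fintype.card_units, hFv]
  obtain ⟨g, hg⟩ := IsCyclic.exists_generator (α := Fvˣ)
  have hog : orderOf g = qv - 1 := by
    rw [orderOf_eq_card_of_forall_mem_zpowers hg, Nat.card_eq_fintype_card, hcard_units]
  set a := g ^ ((qv - 1) / l ^ v) with ha
  have hoa : orderOf a = l ^ v := by
    rw [ha, orderOf_pow, hog, Nat.gcd_eq_right (Nat.div_dvd_of_dvd hdvd),
      Nat.div_div_self hdvd (by omega)]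
  -- the diagonal torus element t
  have htdet : (Matrix.diagonal ![(a : Fv), ((a⁻¹ : Fvˣ) : Fv)]).det = 1 := by
    rw [Matrix.det_diagonal, Fin.prod_univ_two]
    simp
  set t : SL2 Fv := ⟨Matrix.diagonal ![(a : Fv), ((a⁻¹ : Fvˣ) : Fv)], htdet⟩ with ht
  have htpow : ∀ k : ℕ, ((t^k : SL2 Fv) : Matrix (Fin 2) (Fin 2) Fv)
      = Matrix.diagonal ![(a:Fv)^k, ((a⁻¹:Fvˣ):Fv)^k] := by
    intro k
    rw [Matrix.SpecialLinearGroup.coe_pow, ht, Matrix.diagonal_pow]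
    have hvec : (![(a:Fv), ((a⁻¹:Fvˣ):Fv)] ^ k) = ![(a:Fv)^k, ((a⁻¹:Fvˣ):Fv)^k] := by
      funext i
      fin_cases i <;> simp
    rw [hvec]
  have hot : orderOf t = l ^ v := by
    rw [← hoa]
    apply orderOf_eq_orderOf_iff.mpr
    intro k
    constructor
    · intro hk
      have h0 := congrArg (fun B : SL2 Fv => (B : Matrix (Fin 2) (Fin 2) Fv) 0 0) hk
      simp only [htpow k] at h0
      have h1 : (a:Fv)^k = 1 := by
        simpa [Matrix.diagonal_apply_eq] using h0
      apply Units.ext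
      rw [Units.val_pow_eq_pow_val, h1, Units.val_one]
    · intro hk
      apply Subtype.ext
      rw [htpow k]
      have h1 : (a:Fv)^k = 1 := by
        rw [← Units.val_pow_eq_pow_val, hk, Units.val_one]
      have h2 : ((a⁻¹:Fvˣ):Fv)^k = 1 := by
        rw [← Units.val_pow_eq_pow_val, inv_pow, hk, inv_one, Units.val_one]
      rw [h1, h2]
      have : ![(1:Fv), 1] = fun _ => (1:Fv) := by funext i; fin_cases i <;> rfl
      rw [this]
      exact Matrix.diagonal_one
  -- the Weyl element w
  have hwdet : (!![0, 1; -1, 0] : Matrix (Fin 2) (Fin 2) Fv).det = 1 := by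
    simp [Matrix.det_fin_two_of]
  set w : SL2 Fv := ⟨!![0,1;-1,0], hwdet⟩ with hwdef
  have ht'det : (Matrix.diagonal ![((a⁻¹:Fvˣ):Fv), (a:Fv)]).det = 1 := by
    rw [Matrix.det_diagonal, Fin.prod_univ_two]
    simp
  set t' : SL2 Fv := ⟨Matrix.diagonal ![((a⁻¹:Fvˣ):Fv), (a:Fv)], ht'det⟩ with ht'
  have htt' : t * t' = 1 := by
    apply Subtype.ext
    rw [Matrix.SpecialLinearGroup.coe_mul, ht, ht']
    show Matrix.diagonal _ * Matrix.diagonal _ = _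
    rw [Matrix.diagonal_mul_diagonal]
    have h1 : (fun i => ![(a:Fv), ((a⁻¹:Fvˣ):Fv)] i * ![((a⁻¹:Fvˣ):Fv), (a:Fv)] i)
        = fun _ => (1:Fv) := by
      funext i; fin_cases i <;> simp
    rw [h1]
    exact Matrix.diagonal_one.trans (Matrix.SpecialLinearGroup.coe_one).symm
  have ht'inv : t' = t⁻¹ := eq_inv_of_mul_eq_one_right htt'
  have hwt : w * t = t' * w := by
    apply Subtype.ext
    rw [Matrix.SpecialLinearGroup.coe_mul, Matrix.SpecialLinearGroup.coe_mul, ht, ht', hwdef]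
    show (!![0,1;-1,0] : Matrix (Fin 2) (Fin 2) Fv) * Matrix.diagonal _
        = Matrix.diagonal _ * !![0,1;-1,0]
    ext i j
    fin_cases i <;> fin_cases j <;>
      simp [Matrix.mul_apply, Fin.sum_univ_two, Matrix.diagonal]
  have hw : w * t * w⁻¹ = t⁻¹ := by
    rw [hwt, mul_assoc, mul_inv_cancel, mul_one, ht'inv]
  -- the cyclic subgroup C and its index
  set C := Subgroup.zpowers t with hC
  have hcardC : Nat.card C = l ^ v := by rw [hC, Nat.card_zpowers, hot]
  have hcardG : Nat.card (SL2 Fv) = qv * (qv - 1) * (qv + 1) := by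
    rw [sl2aux_card Fv, hFv]
  have hindex : ¬ l ∣ C.index := by
    intro hdvd'
    have h1 : l ^ (v+1) ∣ C.index * Nat.card C := by
      rw [hcardC, pow_succ']
      exact mul_dvd_mul hdvd' dvd_rfl
    rw [Subgroup.index_mul_card, hcardG] at h1
    have h2 : l ^ (v+1) ∣ (qv * (qv+1)) * (qv - 1) := by
      have he : qv * (qv - 1) * (qv + 1) = (qv * (qv+1)) * (qv - 1) := by ring
      rwa [he] at h1
    have hcop : Nat.Coprime (l ^ (v+1)) (qv * (qv+1)) :=
      Nat.Coprime.pow_left _ ((Nat.Prime.coprime_iff_not_dvd hl).mpr hldvd)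
    have h3 : l ^ (v+1) ∣ qv - 1 := hcop.dvd_of_dvd_mul_left h2
    exact Nat.pow_succ_factorization_not_dvd (by omega : qv - 1 ≠ 0) hl h3
  haveI : Fintype (SL2 Fv ⧸ C) := Fintype.ofFinite _
  have hunit : IsUnit ((Fintype.card (SL2 Fv ⧸ C) : ZMod l)) := by
    rw [isUnit_iff_ne_zero]
    intro h0
    apply hindex
    have : (C.index : ZMod l) = 0 := by
      rwa [Subgroup.index_eq_card, Nat.card_eq_fintype_card]
    exact (ZMod.natCast_eq_zero_iff _ _).mp this
  have hu2 : IsUnit (2 : ZMod l) := by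
    rw [isUnit_iff_ne_zero]
    intro h0
    have h2' : ((2:ℕ) : ZMod l) = 0 := by exact_mod_cast h0
    have : l ∣ 2 := (ZMod.natCast_eq_zero_iff _ _).mp h2'
    exact hl2 ((Nat.prime_dvd_prime_iff_eq hl Nat.prime_two).mp this)
  -- reduce to cocycles
  haveI hsub : Subsingleton (groupCohomology.H2 (Rep.trivial (ZMod l) (SL2 Fv) (ZMod l))) := by
    refine subsingleton_of_forall_eq 0 (fun y => ?_)
    induction y using groupCohomology.H2_induction_on with
    | h F => ?_
    rw [groupCohomology.H2π_eq_zero_iff]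
    suffices hsuff : ∃ x : SL2 Fv → ZMod l, ∀ g h : SL2 Fv,
        (Rep.trivial (ZMod l) (SL2 Fv) (ZMod l)).ρ g (x h) - x (g * h) + x g = F (g, h) by
      obtain ⟨x, hx⟩ := hsuff
      exact ⟨x, funext fun p => hx p.1 p.2⟩
    set f : SL2 Fv → SL2 Fv → ZMod l := fun g h => F.1 (g, h) with hfdef
    have hcoc : ∀ x y z : SL2 Fv, f x y + f (x*y) z = f y z + f x (y*z) := by
      intro x y z
      have h := (groupCohomology.mem_cocycles₂_iff F.1).mp F.2 x y z
      rw [Rep.trivial_ρ_apply] at h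
      have h' : f (x*y) z + f x y = f y z + f x (y*z) := h
      linear_combination h'
    have hφ : ∃ φ : SL2 Fv → ZMod l, ∀ x y, x ∈ C → y ∈ C → f x y = φ x + φ y - φ (x*y) := by
      by_cases hv0 : v = 0
      · refine ⟨fun _ => f 1 1, fun x y hx hy => ?_⟩
        have ht1 : t = 1 := by
          rw [← orderOf_eq_one_iff, hot, hv0, pow_zero]
        rw [hC, ht1, Subgroup.zpowers_one_eq_bot, Subgroup.mem_bot] at hx hy
        subst hx; subst hy
        rw [mul_one]
        ring
      · have hn0 : ((orderOf t : ℕ) : ZMod l) = 0 := by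
          rw [hot]
          exact (ZMod.natCast_eq_zero_iff _ _).mpr (dvd_pow_self l hv0)
        exact sl2aux_cyclic f hcoc t w hw
          (by rw [hot]; exact pow_pos hl.pos v) hn0 hu2
    obtain ⟨φ, hφ'⟩ := hφ
    obtain ⟨x, hx⟩ := sl2aux_transfer f hcoc C φ hφ' hunit
    refine ⟨x, fun g h => ?_⟩
    rw [Rep.trivial_ρ_apply]
    show x h - x (g * h) + x g = f g h
    linear_combination -(hx g h)
  exact hsub
end

section
/- Let r ≥ 0 be an integer. The group Γ₀(π^r) ∩ Γ(N) is generated by its two subgroups Γ₀(π^{r+1}) ∩ Γ(N) and Γ₀(π^r) ∩ Γ⁰(π) ∩ Γ(N). -/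
open Matrix Polynomial

/- ### Auxiliary lemmas -/


lemma mem_GammaM_iff {R : Type*} [CommRing R] (M : R) (γ : SL2 R) :
    γ ∈ GammaM M ↔ (M ∣ (γ : Matrix (Fin 2) (Fin 2) R) 0 0 - 1) ∧
      (M ∣ (γ : Matrix (Fin 2) (Fin 2) R) 0 1) ∧
      (M ∣ (γ : Matrix (Fin 2) (Fin 2) R) 1 0) ∧
      (M ∣ (γ : Matrix (Fin 2) (Fin 2) R) 1 1 - 1) := by
  have h1 : ∀ x : R, Ideal.Quotient.mk (Ideal.span {M}) x = 1 ↔ M ∣ x - 1 := fun x => by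
    rw [← map_one (Ideal.Quotient.mk (Ideal.span {M})), Ideal.Quotient.eq,
      Ideal.mem_span_singleton]
  have h0 : ∀ x : R, Ideal.Quotient.mk (Ideal.span {M}) x = 0 ↔ M ∣ x := fun x => by
    rw [Ideal.Quotient.eq_zero_iff_mem, Ideal.mem_span_singleton]
  rw [GammaM, MonoidHom.mem_ker, show ∀ x y : SL2 (R ⧸ Ideal.span {M}),
    x = y ↔ (x : Matrix (Fin 2) (Fin 2) (R ⧸ Ideal.span {M})) = (y : Matrix (Fin 2) (Fin 2) (R ⧸ Ideal.span {M}))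
    from fun x y => ⟨fun h => by rw [h], fun h => Subtype.ext h⟩]
  simp only [Matrix.SpecialLinearGroup.map_apply_coe, Matrix.SpecialLinearGroup.coe_one,
    ← Matrix.ext_iff, Fin.forall_fin_two, RingHom.mapMatrix_apply, Matrix.map_apply,
    Matrix.one_apply_eq, Matrix.one_apply_ne (by decide : (0 : Fin 2) ≠ 1),
    Matrix.one_apply_ne (by decide : (1 : Fin 2) ≠ 0), h1, h0]
  tauto

lemma mem_Gamma0M_iff {R : Type*} [CommRing R] (M : R) (γ : SL2 R) :
    γ ∈ Gamma0M M ↔ M ∣ (γ : Matrix (Fin 2) (Fin 2) R) 1 0 := Iff.rfl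

lemma mem_Gamma0'M_iff {R : Type*} [CommRing R] (M : R) (γ : SL2 R) :
    γ ∈ Gamma0'M M ↔ M ∣ (γ : Matrix (Fin 2) (Fin 2) R) 0 1 := Iff.rfl

def lowerU {R : Type*} [CommRing R] (t : R) : SL2 R :=
  ⟨!![1, 0; t, 1], by simp [Matrix.det_fin_two_of]⟩

def upperU {R : Type*} [CommRing R] (y : R) : SL2 R :=
  ⟨!![1, y; 0, 1], by simp [Matrix.det_fin_two_of]⟩

lemma lowerU_inv {R : Type*} [CommRing R] (t : R) : (lowerU t)⁻¹ = lowerU (-t) := by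
  refine inv_eq_of_mul_eq_one_right ?_
  apply Subtype.ext
  rw [Matrix.SpecialLinearGroup.coe_mul, Matrix.SpecialLinearGroup.coe_one]
  simp [lowerU, Matrix.mul_fin_two, ← Matrix.one_fin_two]

lemma upperU_inv {R : Type*} [CommRing R] (y : R) : (upperU y)⁻¹ = upperU (-y) := by
  refine inv_eq_of_mul_eq_one_right ?_
  apply Subtype.ext
  rw [Matrix.SpecialLinearGroup.coe_mul, Matrix.SpecialLinearGroup.coe_one]
  simp [upperU, Matrix.mul_fin_two, ← Matrix.one_fin_two]

lemma mul_lowerU_coe {R : Type*} [CommRing R] (γ : SL2 R) (t : R) :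
    ((γ * lowerU t : SL2 R) : Matrix (Fin 2) (Fin 2) R) =
      !![γ.1 0 0 + γ.1 0 1 * t, γ.1 0 1; γ.1 1 0 + γ.1 1 1 * t, γ.1 1 1] := by
  rw [Matrix.SpecialLinearGroup.coe_mul]
  ext i j
  fin_cases i <;> fin_cases j <;>
    simp [lowerU, Matrix.mul_apply, Fin.sum_univ_two]

lemma mul_upperU_coe {R : Type*} [CommRing R] (γ : SL2 R) (y : R) :
    ((γ * upperU y : SL2 R) : Matrix (Fin 2) (Fin 2) R) =
      !![γ.1 0 0, γ.1 0 0 * y + γ.1 0 1; γ.1 1 0, γ.1 1 0 * y + γ.1 1 1] := by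
  rw [Matrix.SpecialLinearGroup.coe_mul]
  ext i j
  fin_cases i <;> fin_cases j <;>
    simp [upperU, Matrix.mul_apply, Fin.sum_univ_two]

lemma lowerU_mem_GammaM {R : Type*} [CommRing R] {M t : R} (h : M ∣ t) :
    lowerU t ∈ GammaM M := by
  rw [mem_GammaM_iff]
  refine ⟨?_, ?_, ?_, ?_⟩ <;> simp [lowerU, h]

lemma upperU_mem_GammaM {R : Type*} [CommRing R] {M y : R} (h : M ∣ y) :
    upperU y ∈ GammaM M := by
  rw [mem_GammaM_iff]
  refine ⟨?_, ?_, ?_, ?_⟩ <;> simp [upperU, h]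

/-- The key step: if the lower-right entry of `γ` is not divisible by `π`, then `γ` is in the
join. -/
lemma key_step {F : Type*} [Field F] {π N : F[X]} (hπirr : Irreducible π) (hNd : ¬ π ∣ N)
    (r : ℕ) (γ : SL2 F[X]) (hc : π ^ r ∣ (γ : Matrix (Fin 2) (Fin 2) F[X]) 1 0)
    (hγN : γ ∈ GammaM N) (hd : ¬ π ∣ (γ : Matrix (Fin 2) (Fin 2) F[X]) 1 1) :
    γ ∈ (Gamma0M (π ^ (r + 1)) ⊓ GammaM N) ⊔ (Gamma0M (π ^ r) ⊓ Gamma0'M π ⊓ GammaM N) := by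
  obtain ⟨c', hc'⟩ := hc
  have hdN : ¬ π ∣ (γ : Matrix (Fin 2) (Fin 2) F[X]) 1 1 * N := fun h =>
    (hπirr.prime.dvd_mul.mp h).elim hd hNd
  obtain ⟨v, u, huv⟩ := hπirr.coprime_iff_not_dvd.2 hdN
  set t : F[X] := π ^ r * (N * (-c' * u)) with ht
  have hNt : N ∣ t := ⟨π ^ r * (-c' * u), by rw [ht]; ring⟩
  have hπt : π ^ r ∣ t := ⟨N * (-c' * u), rfl⟩
  have hδ10 : ((γ * lowerU t : SL2 F[X]) : Matrix (Fin 2) (Fin 2) F[X]) 1 0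
      = (γ : Matrix (Fin 2) (Fin 2) F[X]) 1 0 + (γ : Matrix (Fin 2) (Fin 2) F[X]) 1 1 * t := by
    rw [mul_lowerU_coe]; simp
  have hkey : π ^ (r + 1) ∣
      (γ : Matrix (Fin 2) (Fin 2) F[X]) 1 0 + (γ : Matrix (Fin 2) (Fin 2) F[X]) 1 1 * t := by
    refine ⟨c' * v, ?_⟩
    rw [hc', ht, pow_succ]
    linear_combination (-(π ^ r * c')) * huv
  have hδmem : γ * lowerU t ∈ Gamma0M (π ^ (r + 1)) ⊓ GammaM N := by
    refine ⟨?_, mul_mem hγN (lowerU_mem_GammaM hNt)⟩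
    show π ^ (r + 1) ∣ ((γ * lowerU t : SL2 F[X]) : Matrix (Fin 2) (Fin 2) F[X]) 1 0
    rw [hδ10]
    exact hkey
  have hLmem : lowerU t ∈ Gamma0M (π ^ r) ⊓ Gamma0'M π ⊓ GammaM N := by
    refine ⟨⟨?_, ?_⟩, lowerU_mem_GammaM hNt⟩
    · show π ^ r ∣ ((lowerU t : SL2 F[X]) : Matrix (Fin 2) (Fin 2) F[X]) 1 0
      simpa [lowerU] using hπt
    · show π ∣ ((lowerU t : SL2 F[X]) : Matrix (Fin 2) (Fin 2) F[X]) 0 1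
      simp [lowerU]
  have hγeq : γ = (γ * lowerU t) * (lowerU t)⁻¹ := by group
  rw [hγeq]
  exact mul_mem (Subgroup.mem_sup_left hδmem) (Subgroup.mem_sup_right (inv_mem hLmem))

/-- `Γ₀(π^r) ∩ Γ(N)` is generated by its two subgroups
`Γ₀(π^(r+1)) ∩ Γ(N)` and `Γ₀(π^r) ∩ Γ⁰(π) ∩ Γ(N)`. -/
theorem statement13
    {F : Type*} [Field F] [Fintype F] (q : ℕ) (hq : Fintype.card F = q)
    (π : F[X]) (hπirr : Irreducible π) (hπmonic : π.Monic)
    (N : F[X]) (hNdeg : 0 < N.natDegree) (hcop : IsCoprime N π) (r : ℕ) :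
    (Gamma0M (π ^ (r + 1)) ⊓ GammaM N) ⊔ (Gamma0M (π ^ r) ⊓ Gamma0'M π ⊓ GammaM N)
      = Gamma0M (π ^ r) ⊓ GammaM N := by
  apply le_antisymm
  · apply sup_le
    · refine inf_le_inf_right _ ?_
      intro γ h
      exact (pow_dvd_pow π (Nat.le_succ r)).trans h
    · exact le_inf (inf_le_left.trans inf_le_left) inf_le_right
  · intro γ hγ
    obtain ⟨hc, hN⟩ := hγ
    replace hc : π ^ r ∣ (γ : Matrix (Fin 2) (Fin 2) F[X]) 1 0 := hc
    have hπN : ¬ π ∣ N := fun h => hπirr.not_isUnit (hcop.isUnit_of_dvd' h dvd_rfl)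
    by_cases hd : π ∣ (γ : Matrix (Fin 2) (Fin 2) F[X]) 1 1
    · -- π ∣ d: then π ∤ c, so r = 0; fix up with an upper unipotent.
      have hdet : (γ : Matrix (Fin 2) (Fin 2) F[X]) 0 0 * (γ : Matrix (Fin 2) (Fin 2) F[X]) 1 1
          - (γ : Matrix (Fin 2) (Fin 2) F[X]) 0 1 * (γ : Matrix (Fin 2) (Fin 2) F[X]) 1 0
          = 1 := by
        have h2 := γ.2
        rwa [Matrix.det_fin_two] at h2
      have hπc : ¬ π ∣ (γ : Matrix (Fin 2) (Fin 2) F[X]) 1 0 := by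
        intro h
        exact hπirr.not_isUnit (isUnit_of_dvd_one (hdet ▸ dvd_sub (hd.mul_left _) (h.mul_left _)))
      have hr : r = 0 := by
        by_contra hr0
        exact hπc ((dvd_pow_self π hr0).trans hc)
      subst hr
      have hcN : ¬ π ∣ (γ : Matrix (Fin 2) (Fin 2) F[X]) 1 0 * N := fun h =>
        (hπirr.prime.dvd_mul.mp h).elim hπc hπN
      obtain ⟨v, u, huv⟩ := hπirr.coprime_iff_not_dvd.2 hcN
      have hNy : N ∣ N * u := ⟨u, rfl⟩
      have e11 : ((γ * upperU (N * u) : SL2 F[X]) : Matrix (Fin 2) (Fin 2) F[X]) 1 1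
          = (γ : Matrix (Fin 2) (Fin 2) F[X]) 1 0 * (N * u)
            + (γ : Matrix (Fin 2) (Fin 2) F[X]) 1 1 := by
        rw [mul_upperU_coe]; simp
      have e10 : ((γ * upperU (N * u) : SL2 F[X]) : Matrix (Fin 2) (Fin 2) F[X]) 1 0
          = (γ : Matrix (Fin 2) (Fin 2) F[X]) 1 0 := by
        rw [mul_upperU_coe]; simp
      have hd' : ¬ π ∣ ((γ * upperU (N * u) : SL2 F[X]) : Matrix (Fin 2) (Fin 2) F[X]) 1 1 := by
        rw [e11]
        intro h
        have h1 : (1 : F[X]) = ((γ : Matrix (Fin 2) (Fin 2) F[X]) 1 0 * (N * u)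
            + (γ : Matrix (Fin 2) (Fin 2) F[X]) 1 1)
            - (γ : Matrix (Fin 2) (Fin 2) F[X]) 1 1 + v * π := by
          linear_combination -huv
        exact hπirr.not_isUnit (isUnit_of_dvd_one
          (h1 ▸ dvd_add (dvd_sub h hd) (Dvd.intro_left v rfl)))
      have hmem := key_step hπirr hπN 0 (γ * upperU (N * u))
        (by rw [e10, pow_zero]; exact one_dvd _)
        (mul_mem hN (upperU_mem_GammaM hNy)) hd'
      have hU : upperU (N * u) ∈ Gamma0M (π ^ (0 + 1)) ⊓ GammaM N := by
        refine ⟨?_, upperU_mem_GammaM hNy⟩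
        show π ^ (0 + 1) ∣ ((upperU (N * u) : SL2 F[X]) : Matrix (Fin 2) (Fin 2) F[X]) 1 0
        simp [upperU]
      have hγeq : γ = (γ * upperU (N * u)) * (upperU (N * u))⁻¹ := by group
      rw [hγeq]
      exact mul_mem hmem (Subgroup.mem_sup_left (inv_mem hU))
    · exact key_step hπirr hπN r γ hc hN hd
end
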